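/- arXiv:1701.00476 — 2 statements merged into one kernel-verified Lean document; each statement's English description precedes it below -/
import Mathlib

section
/- Transitivity of the left minus order: if A, B, C ∈ L(H) satisfy R(B) = R(A) ∔ R(B−A) and R(C) = R(B) ∔ R(C−B), then R(C) = R(A) ∔ R(C−A). -/
/-!
Write `C - A = (C - B) + (B - A)`. The ranges of `A` and `B - A` lie in `R(B)`, so if
`v = (C - A) w` lies in `R(A)`, then `(C - B) w = v - (B - A) w` lies in
`R(B) ∩ R(C - B) = 0`. Hence `v = (B - A) w ∈ R(A) ∩ R(B - A) = 0`. The sum condition is the same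
decomposition together with `R(A) ⊆ R(B) ⊆ R(C)`.
-/

namespace LinearMap

variable {R M N : Type*} [Ring R] [AddCommGroup M] [AddCommGroup N] [Module R M] [Module R N]

def LeftMinusLE (f g : M →ₗ[R] N) : Prop :=
  range g = range f ⊔ range (g - f) ∧ range f ⊓ range (g - f) = ⊥

namespace LeftMinusLE

variable {f g h : M →ₗ[R] N}

theorem range_le (hfg : LeftMinusLE f g) : range f ≤ range g :=
  hfg.1 ▸ le_sup_left

theorem range_sub_le (hfg : LeftMinusLE f g) : range (g - f) ≤ range g :=
  hfg.1 ▸ le_sup_right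

theorem range_sub_le_of_trans (hfg : LeftMinusLE f g) (hgh : LeftMinusLE g h) :
    range (h - f) ≤ range h := by
  have hsplit : h - f = (h - g) + (g - f) := by abel
  rw [hsplit]
  exact (range_add_le _ _).trans
    (sup_le hgh.range_sub_le (hfg.range_sub_le.trans hgh.range_le))

theorem range_inf_range_sub_eq_bot_of_trans (hfg : LeftMinusLE f g) (hgh : LeftMinusLE g h) :
    range f ⊓ range (h - f) = ⊥ := by
  refine eq_bot_iff.2 fun v hv => ?_
  obtain ⟨hvf, w, rfl⟩ := Submodule.mem_inf.1 hv
  have hsplit : (h - f) w = (h - g) w + (g - f) w := by simp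
  have hhg : (h - g) w = 0 := by
    have hmem : (h - g) w ∈ range g ⊓ range (h - g) := by
      refine Submodule.mem_inf.2 ⟨?_, mem_range_self _ w⟩
      rw [show (h - g) w = (h - f) w - (g - f) w by rw [hsplit, add_sub_cancel_right]]
      exact sub_mem (hfg.range_le hvf) (hfg.range_sub_le (mem_range_self _ w))
    rwa [hgh.2] at hmem
  have hmem : (h - f) w ∈ range f ⊓ range (g - f) := by
    rw [hsplit, hhg, zero_add] at hvf ⊢
    exact Submodule.mem_inf.2 ⟨hvf, mem_range_self _ w⟩
  rwa [hfg.2] at hmem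

theorem trans (hfg : LeftMinusLE f g) (hgh : LeftMinusLE g h) : LeftMinusLE f h := by
  refine ⟨le_antisymm ?_ ?_, hfg.range_inf_range_sub_eq_bot_of_trans hgh⟩
  · calc range h = range (f + (h - f)) := by rw [add_sub_cancel]
      _ ≤ range f ⊔ range (h - f) := range_add_le _ _
  · exact sup_le (hfg.range_le.trans hgh.range_le) (hfg.range_sub_le_of_trans hgh)

end LeftMinusLE

end LinearMap

theorem stmt_11_general {H : Type*} [NormedAddCommGroup H] [InnerProductSpace ℂ H]
    (A B C : H →L[ℂ] H)
    (hAB : LinearMap.range (B : H →ₗ[ℂ] H) = LinearMap.range (A : H →ₗ[ℂ] H) ⊔ LinearMap.range ((B - A : H →L[ℂ] H) : H →ₗ[ℂ] H))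
    (hAB' : LinearMap.range (A : H →ₗ[ℂ] H) ⊓ LinearMap.range ((B - A : H →L[ℂ] H) : H →ₗ[ℂ] H) = ⊥)
    (hBC : LinearMap.range (C : H →ₗ[ℂ] H) = LinearMap.range (B : H →ₗ[ℂ] H) ⊔ LinearMap.range ((C - B : H →L[ℂ] H) : H →ₗ[ℂ] H))
    (hBC' : LinearMap.range (B : H →ₗ[ℂ] H) ⊓ LinearMap.range ((C - B : H →L[ℂ] H) : H →ₗ[ℂ] H) = ⊥) :
    LinearMap.range (C : H →ₗ[ℂ] H) = LinearMap.range (A : H →ₗ[ℂ] H) ⊔ LinearMap.range ((C - A : H →L[ℂ] H) : H →ₗ[ℂ] H) ∧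
      LinearMap.range (A : H →ₗ[ℂ] H) ⊓ LinearMap.range ((C - A : H →L[ℂ] H) : H →ₗ[ℂ] H) = ⊥ := by
  simp only [ContinuousLinearMap.toLinearMap_sub] at *
  exact LinearMap.LeftMinusLE.trans ⟨hAB, hAB'⟩ ⟨hBC, hBC'⟩

theorem stmt_11 {H : Type*} [NormedAddCommGroup H] [InnerProductSpace ℂ H]
    [CompleteSpace H] (A B C : H →L[ℂ] H)
    (hAB : LinearMap.range (B : H →ₗ[ℂ] H) = LinearMap.range (A : H →ₗ[ℂ] H) ⊔ LinearMap.range ((B - A : H →L[ℂ] H) : H →ₗ[ℂ] H))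
    (hAB' : LinearMap.range (A : H →ₗ[ℂ] H) ⊓ LinearMap.range ((B - A : H →L[ℂ] H) : H →ₗ[ℂ] H) = ⊥)
    (hBC : LinearMap.range (C : H →ₗ[ℂ] H) = LinearMap.range (B : H →ₗ[ℂ] H) ⊔ LinearMap.range ((C - B : H →L[ℂ] H) : H →ₗ[ℂ] H))
    (hBC' : LinearMap.range (B : H →ₗ[ℂ] H) ⊓ LinearMap.range ((C - B : H →L[ℂ] H) : H →ₗ[ℂ] H) = ⊥) :
    LinearMap.range (C : H →ₗ[ℂ] H) = LinearMap.range (A : H →ₗ[ℂ] H) ⊔ LinearMap.range ((C - A : H →L[ℂ] H) : H →ₗ[ℂ] H) ∧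
      LinearMap.range (A : H →ₗ[ℂ] H) ⊓ LinearMap.range ((C - A : H →L[ℂ] H) : H →ₗ[ℂ] H) = ⊥ :=
  stmt_11_general A B C hAB hAB' hBC hBC'
end

section
/- Let A, B ∈ L(H) with R(A+B) closed and A *≤ (A+B) (star order: A*A = A*(A+B) and AA* = (A+B)A*). Then (A+B)† = A† + B†. -/
open ContinuousLinearMap

/-- `S` is the Moore–Penrose inverse of `T`. -/
def IsMoorePenroseInverse {H : Type*} [NormedAddCommGroup H] [InnerProductSpace ℂ H]
    [CompleteSpace H] (T S : H →L[ℂ] H) : Prop :=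
  T ∘L S ∘L T = T ∧ S ∘L T ∘L S = S ∧
    IsSelfAdjoint (T ∘L S) ∧ IsSelfAdjoint (S ∘L T)

/-!
The star order `A *≤ A + B` says exactly that `A* B = 0` and `B A* = 0`. For such orthogonal
summands the four Penrose equations for `A† + B†` split into those for `A†` and `B†`, because all
cross terms `A† B`, `B A†`, `B† A`, `A B†` vanish, and the Moore–Penrose inverse is unique.
-/

def IsPenroseInverse {R : Type*} [Mul R] [Star R] (a s : R) : Prop :=
  a * s * a = a ∧ s * a * s = s ∧ IsSelfAdjoint (a * s) ∧ IsSelfAdjoint (s * a)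

theorem isMoorePenroseInverse_iff {H : Type*} [NormedAddCommGroup H] [InnerProductSpace ℂ H]
    [CompleteSpace H] (T S : H →L[ℂ] H) :
    IsMoorePenroseInverse T S ↔ IsPenroseInverse T S := by
  simp only [IsMoorePenroseInverse, IsPenroseInverse, ← mul_def, mul_assoc]

namespace IsPenroseInverse

variable {R : Type*} [Semiring R] [StarRing R] {a b s t : R}

theorem eq_mul_star_mul (h : IsPenroseInverse a s) : s = s * star s * star a := by
  conv_lhs => rw [← h.2.1, mul_assoc, ← h.2.2.1.star_eq, star_mul, ← mul_assoc]

theorem eq_star_mul_mul (h : IsPenroseInverse a s) : s = star a * star s * s := by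
  conv_lhs => rw [← h.2.1, ← h.2.2.2.star_eq, star_mul]

theorem mul_eq_zero_of_star_mul_eq_zero (h : IsPenroseInverse a s) (hab : star a * b = 0) :
    s * b = 0 := by
  rw [h.eq_mul_star_mul, mul_assoc, hab, mul_zero]

theorem mul_eq_zero_of_mul_star_eq_zero (h : IsPenroseInverse a s) (hba : b * star a = 0) :
    b * s = 0 := by
  rw [h.eq_star_mul_mul, ← mul_assoc, ← mul_assoc, hba, zero_mul, zero_mul]

theorem unique (h₁ : IsPenroseInverse a s) (h₂ : IsPenroseInverse a t) : s = t := by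
  obtain ⟨a1, b1, c1, d1⟩ := h₁
  obtain ⟨a2, b2, c2, d2⟩ := h₂
  have hleft : a * s = a * t := by
    calc a * s = star (a * s) := c1.star_eq.symm
      _ = star (a * t * a * s) := by rw [a2]
      _ = star (a * s) * star (a * t) := by simp only [star_mul, mul_assoc]
      _ = a * t := by rw [c1.star_eq, c2.star_eq, ← mul_assoc, a1]
  have hright : s * a = t * a := by
    calc s * a = star (s * a) := d1.star_eq.symm
      _ = star (s * (a * t * a)) := by rw [a2]
      _ = star (t * a) * star (s * a) := by simp only [star_mul, mul_assoc]
      _ = t * a := by rw [d1.star_eq, d2.star_eq, mul_assoc, ← mul_assoc a, a1]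
  calc s = s * a * s := b1.symm
    _ = t * a * t := by rw [mul_assoc, hleft, ← mul_assoc, hright]
    _ = t := b2

theorem add (ha : IsPenroseInverse a s) (hb : IsPenroseInverse b t)
    (hab : star a * b = 0) (hba : b * star a = 0) : IsPenroseInverse (a + b) (s + t) := by
  have hab' : star b * a = 0 := by simpa using congrArg star hab
  have hba' : a * star b = 0 := by simpa using congrArg star hba
  have hsb := ha.mul_eq_zero_of_star_mul_eq_zero hab
  have hbs := ha.mul_eq_zero_of_mul_star_eq_zero hba
  have hta := hb.mul_eq_zero_of_star_mul_eq_zero hab'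
  have hat := hb.mul_eq_zero_of_mul_star_eq_zero hba'
  have hright : (a + b) * (s + t) = a * s + b * t := by
    simp only [add_mul, mul_add, hat, hbs, add_zero, zero_add]
  have hleft : (s + t) * (a + b) = s * a + t * b := by
    simp only [add_mul, mul_add, hsb, hta, add_zero, zero_add]
  refine ⟨?_, ?_, ?_, ?_⟩
  · rw [hright]
    simp only [add_mul, mul_add, mul_assoc, hsb, hta, mul_zero, add_zero, zero_add]
    simp only [← mul_assoc, ha.1, hb.1]
  · rw [hleft]
    simp only [add_mul, mul_add, mul_assoc, hat, hbs, mul_zero, add_zero, zero_add]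
    simp only [← mul_assoc, ha.2.1, hb.2.1]
  · exact hright ▸ ha.2.2.1.add hb.2.2.1
  · exact hleft ▸ ha.2.2.2.add hb.2.2.2

end IsPenroseInverse

theorem stmt_18_general {H : Type*} [NormedAddCommGroup H] [InnerProductSpace ℂ H]
    [CompleteSpace H] (A B Ad Bd ABd : H →L[ℂ] H)
    (hstar1 : adjoint A ∘L A = adjoint A ∘L (A + B))
    (hstar2 : A ∘L adjoint A = (A + B) ∘L adjoint A)
    (hAd : IsMoorePenroseInverse A Ad) (hBd : IsMoorePenroseInverse B Bd)
    (hABd : IsMoorePenroseInverse (A + B) ABd) :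
    ABd = Ad + Bd := by
  simp only [← mul_def, ← star_eq_adjoint, mul_add, add_mul, left_eq_add] at hstar1 hstar2
  rw [isMoorePenroseInverse_iff] at hAd hBd hABd
  exact hABd.unique (hAd.add hBd hstar1 hstar2)

theorem stmt_18 {H : Type*} [NormedAddCommGroup H] [InnerProductSpace ℂ H]
    [CompleteSpace H] (A B Ad Bd ABd : H →L[ℂ] H)
    (hclosed : IsClosed ((LinearMap.range ((A + B : H →L[ℂ] H) : H →ₗ[ℂ] H) : Submodule ℂ H) : Set H))
    (hstar1 : adjoint A ∘L A = adjoint A ∘L (A + B))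
    (hstar2 : A ∘L adjoint A = (A + B) ∘L adjoint A)
    (hAd : IsMoorePenroseInverse A Ad) (hBd : IsMoorePenroseInverse B Bd)
    (hABd : IsMoorePenroseInverse (A + B) ABd) :
    ABd = Ad + Bd :=
  stmt_18_general A B Ad Bd ABd hstar1 hstar2 hAd hBd hABd
end
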